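/- Let γ, B, C be integers with γ ≠ 0 and B² − 4γC ≠ 0. For every ε > 0 there is a constant C₀ > 0, depending only on ε, γ, B and C, such that for every positive integer c all of whose prime factors divide 4γ and for all integers u, v, one has |S_c^{B,C}(γ; u, v)| ≤ C₀ · c^{5/2+ε}. -/

import Mathlib

/-- `e_c(t) = exp(2πi t / c)`. -/
noncomputable def eC (c : ℕ) (t : ℤ) : ℂ :=
  Complex.exp (2 * Real.pi * Complex.I * t / c)

/-- The Kloosterman sum `S(m, n; c) = ∑_{x mod c, (x,c)=1} e_c(m x + n x̄)`. -/
noncomputable def Kl (m n : ℤ) (c : ℕ) : ℂ :=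
  ∑ x ∈ (Finset.range c).filter (fun x => Nat.Coprime x c),
    eC c (m * x + n * (((x : ZMod c)⁻¹).val : ℤ))

/-- The sum `S_c^{B,C}(γ; u, v) = ∑_{a,b mod c} S(γa²+Ba+C, γb²+Bb+C; c)
    e_c(2γab + a(B+u) + b(B+v))`. -/
noncomputable def Sbc (γ B C u v : ℤ) (c : ℕ) : ℂ :=
  ∑ a ∈ Finset.range c, ∑ b ∈ Finset.range c,
    Kl (γ * (a : ℤ) ^ 2 + B * a + C) (γ * (b : ℤ) ^ 2 + B * b + C) c *
      eC c (2 * γ * a * b + a * (B + u) + b * (B + v))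


lemma eC_add (c : ℕ) (s t : ℤ) : eC c (s + t) = eC c s * eC c t := by
  rw [eC, eC, eC, ← Complex.exp_add]; congr 1; push_cast; ring

lemma eC_abs (c : ℕ) (t : ℤ) : ‖eC c t‖ = 1 := by
  have : eC c t = Complex.exp (((2 * Real.pi * t / c : ℝ) : ℂ) * Complex.I) := by
    rw [eC]; congr 1; push_cast; ring
  rw [this, Complex.norm_exp_ofReal_mul_I]

lemma eC_dvd (c : ℕ) (hc : 0 < c) (t : ℤ) (h : (c : ℤ) ∣ t) : eC c t = 1 := by
  obtain ⟨k, rfl⟩ := h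
  have hc' : (c : ℂ) ≠ 0 := by exact_mod_cast hc.ne'
  have h2 : 2 * (Real.pi : ℂ) * Complex.I * (((c : ℤ) * k : ℤ) : ℂ) / c
      = (k : ℂ) * (2 * Real.pi * Complex.I) := by
    push_cast; field_simp
  rw [eC, h2, Complex.exp_int_mul_two_pi_mul_I]

lemma eC_congr (c : ℕ) (hc : 0 < c) (s t : ℤ) (h : (c : ℤ) ∣ s - t) : eC c s = eC c t := by
  have : eC c s = eC c (t + (s - t)) := by congr 1; ring
  rw [this, eC_add, eC_dvd c hc _ h, mul_one]

lemma eC_conj (c : ℕ) (t : ℤ) : (starRingEnd ℂ) (eC c t) = eC c (-t) := by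
  rw [eC, eC, ← Complex.exp_conj]
  congr 1
  simp [map_div₀, Complex.conj_I, map_ofNat]


noncomputable def Ech (c : ℕ) (z : ZMod c) : ℂ := eC c (z.val : ℤ)

lemma dvd_sub_val (c : ℕ) (hc : 0 < c) (t : ℤ) : (c : ℤ) ∣ t - (((t : ZMod c)).val : ℤ) := by
  haveI : NeZero c := ⟨hc.ne'⟩
  rw [← ZMod.intCast_zmod_eq_zero_iff_dvd]
  push_cast
  simp [ZMod.natCast_val, ZMod.intCast_cast]

lemma eC_eq_Ech (c : ℕ) (hc : 0 < c) (t : ℤ) : eC c t = Ech c ((t : ZMod c)) :=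
  eC_congr c hc _ _ (dvd_sub_val c hc t)

lemma Ech_add (c : ℕ) (hc : 0 < c) (z w : ZMod c) :
    Ech c (z + w) = Ech c z * Ech c w := by
  haveI : NeZero c := ⟨hc.ne'⟩
  rw [Ech, Ech, Ech, ← eC_add]
  refine eC_congr c hc _ _ ?_
  rw [← ZMod.intCast_zmod_eq_zero_iff_dvd]
  push_cast
  simp [ZMod.natCast_val, ZMod.intCast_cast]

lemma Ech_abs (c : ℕ) (z : ZMod c) : ‖Ech c z‖ = 1 := eC_abs c _

lemma Ech_zero (c : ℕ) (hc : 0 < c) : Ech c 0 = 1 := by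
  haveI : NeZero c := ⟨hc.ne'⟩
  rw [Ech, ZMod.val_zero]
  exact eC_dvd c hc 0 (dvd_zero _)

lemma Ech_conj (c : ℕ) (hc : 0 < c) (z : ZMod c) :
    (starRingEnd ℂ) (Ech c z) = Ech c (-z) := by
  haveI : NeZero c := ⟨hc.ne'⟩
  rw [Ech, eC_conj, Ech]
  refine eC_congr c hc _ _ ?_
  rw [← ZMod.intCast_zmod_eq_zero_iff_dvd]
  push_cast
  simp [ZMod.natCast_val, ZMod.intCast_cast]

lemma Ech_ne_one (c : ℕ) (hc : 0 < c) (z : ZMod c) (hz : z ≠ 0) : Ech c z ≠ 1 := by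
  haveI : NeZero c := ⟨hc.ne'⟩
  rw [Ech]
  intro h
  rw [eC, Complex.exp_eq_one_iff] at h
  obtain ⟨n, hn⟩ := h
  have hc' : (c : ℂ) ≠ 0 := by exact_mod_cast hc.ne'
  have h2 : (2 : ℂ) * Real.pi * Complex.I ≠ 0 := by
    simp [Real.pi_ne_zero, Complex.I_ne_zero]
  have hvc : ((z.val : ℤ) : ℂ) = (n : ℂ) * c := by
    have hn' : 2 * (Real.pi:ℂ) * Complex.I * (z.val : ℂ) = (n : ℂ) * (2 * Real.pi * Complex.I) * c := by
      have := (div_eq_iff hc').mp hn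
      linear_combination this
    have : (z.val : ℂ) * (2 * (Real.pi:ℂ) * Complex.I) = ((n:ℂ) * c) * (2 * (Real.pi:ℂ) * Complex.I) := by
      linear_combination hn'
    have := mul_right_cancel₀ h2 this
    push_cast
    exact this
  have hz2 : (z.val : ℤ) = n * c := by exact_mod_cast hvc
  have hlt : z.val < c := ZMod.val_lt z
  have hcz : (0:ℤ) < c := by exact_mod_cast hc
  have hn0 : n = 0 := by nlinarith [hz2, Int.ofNat_nonneg z.val, (by exact_mod_cast hlt : (z.val:ℤ) < c)]
  rw [hn0, zero_mul] at hz2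
  have : z.val = 0 := by exact_mod_cast hz2
  exact hz (by rwa [← ZMod.val_eq_zero])


lemma Ech_ortho (c : ℕ) [NeZero c] (k : ZMod c) (hk : k ≠ 0) :
    ∑ z : ZMod c, Ech c (k * z) = 0 := by
  have hc : 0 < c := Nat.pos_of_ne_zero (NeZero.ne c)
  set S := ∑ z : ZMod c, Ech c (k * z) with hS
  have hshift : Ech c k * S = S := by
    rw [hS, Finset.mul_sum]
    have : ∀ z : ZMod c, Ech c k * Ech c (k * z) = Ech c (k * (z + 1)) := by
      intro z
      rw [← Ech_add c hc]
      congr 1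
      ring
    rw [Finset.sum_congr rfl (fun z _ => this z)]
    exact Fintype.sum_equiv (Equiv.addRight 1) _ _ (fun z => rfl)
  have hne := Ech_ne_one c hc k hk
  have hfac : (Ech c k - 1) * S = 0 := by linear_combination hshift
  rcases mul_eq_zero.mp hfac with h | h
  · exact absurd (sub_eq_zero.mp h) hne
  · exact h

lemma sum_range_eq_sum_zmod (c : ℕ) [NeZero c] (F : ZMod c → ℂ) :
    ∑ a ∈ Finset.range c, F ((a : ℕ) : ZMod c) = ∑ z : ZMod c, F z := by
  refine Finset.sum_nbij' (fun a => ((a : ℕ) : ZMod c)) (fun z => z.val) ?_ ?_ ?_ ?_ ?_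
  · intro a _; exact Finset.mem_univ _
  · intro z _; exact Finset.mem_range.mpr (ZMod.val_lt z)
  · intro a ha; exact ZMod.val_natCast_of_lt (Finset.mem_range.mp ha)
  · intro z _; simp [ZMod.natCast_val, ZMod.cast_id]
  · intro a _; rfl


lemma gauss_sq (c : ℕ) [NeZero c] (A B₁ : ZMod c) :
    (‖∑ z : ZMod c, Ech c (A * z ^ 2 + B₁ * z)‖) ^ 2 ≤
      (c : ℝ) * (Finset.univ.filter (fun h : ZMod c => 2 * A * h = 0)).card := by
  have hc : 0 < c := Nat.pos_of_ne_zero (NeZero.ne c)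
  set G := ∑ z : ZMod c, Ech c (A * z ^ 2 + B₁ * z) with hG
  have habs : (‖G‖) ^ 2 = ‖G * (starRingEnd ℂ) G‖ := by
    rw [norm_mul, Complex.norm_conj]; ring
  have key : G * (starRingEnd ℂ) G =
      ∑ h : ZMod c, Ech c (A * h ^ 2 + B₁ * h) * (if 2 * A * h = 0 then (c : ℂ) else 0) := by
    have step1 : (starRingEnd ℂ) G = ∑ w : ZMod c, Ech c (-(A * w ^ 2 + B₁ * w)) := by
      rw [hG, map_sum]
      exact Finset.sum_congr rfl fun w _ => Ech_conj c hc _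
    calc G * (starRingEnd ℂ) G
        = ∑ z : ZMod c, ∑ w : ZMod c,
            Ech c (A * z ^ 2 + B₁ * z) * Ech c (-(A * w ^ 2 + B₁ * w)) := by
          rw [step1, hG, Finset.sum_mul_sum]
      _ = ∑ w : ZMod c, ∑ z : ZMod c,
            Ech c (A * z ^ 2 + B₁ * z) * Ech c (-(A * w ^ 2 + B₁ * w)) := Finset.sum_comm
      _ = ∑ w : ZMod c, ∑ h : ZMod c,
            Ech c (A * (w + h) ^ 2 + B₁ * (w + h)) * Ech c (-(A * w ^ 2 + B₁ * w)) := by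
          refine Finset.sum_congr rfl fun w _ => ?_
          exact (Fintype.sum_equiv (Equiv.addLeft w) _ _ (fun h => rfl)).symm
      _ = ∑ w : ZMod c, ∑ h : ZMod c,
            Ech c (A * h ^ 2 + B₁ * h) * Ech c ((2 * A * h) * w) := by
          refine Finset.sum_congr rfl fun w _ => Finset.sum_congr rfl fun h _ => ?_
          rw [← Ech_add c hc, ← Ech_add c hc]
          congr 1
          ring
      _ = ∑ h : ZMod c, ∑ w : ZMod c,
            Ech c (A * h ^ 2 + B₁ * h) * Ech c ((2 * A * h) * w) := Finset.sum_comm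
      _ = ∑ h : ZMod c, Ech c (A * h ^ 2 + B₁ * h) *
            (if 2 * A * h = 0 then (c : ℂ) else 0) := by
          refine Finset.sum_congr rfl fun h _ => ?_
          rw [← Finset.mul_sum]
          congr 1
          by_cases h0 : 2 * A * h = 0
          · simp only [h0, if_pos, zero_mul]
            rw [Finset.sum_congr rfl fun w _ => Ech_zero c hc]
            simp [ZMod.card]
          · rw [if_neg h0]
            exact Ech_ortho c _ h0
  rw [habs, key]
  calc ‖∑ h : ZMod c, Ech c (A * h ^ 2 + B₁ * h) *
          (if 2 * A * h = 0 then (c : ℂ) else 0)‖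
      ≤ ∑ h : ZMod c, ‖Ech c (A * h ^ 2 + B₁ * h) *
          (if 2 * A * h = 0 then (c : ℂ) else 0)‖ := norm_sum_le _ _
    _ = ∑ h : ZMod c, (if 2 * A * h = 0 then (c : ℝ) else 0) := by
        refine Finset.sum_congr rfl fun h _ => ?_
        rw [norm_mul, Ech_abs, one_mul]
        by_cases h0 : 2 * A * h = 0 <;> simp [h0]
    _ = (Finset.univ.filter (fun h : ZMod c => 2 * A * h = 0)).card * (c : ℝ) := by
        rw [← Finset.sum_filter, Finset.sum_const, nsmul_eq_mul]
    _ = (c : ℝ) * (Finset.univ.filter (fun h : ZMod c => 2 * A * h = 0)).card := by ring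

lemma count_le (c : ℕ) [NeZero c] (γ : ℤ) (hγ : γ ≠ 0) (x : ℕ) (hx : Nat.Coprime x c) :
    ((Finset.univ.filter (fun h : ZMod c =>
        ((2 * γ * x : ℤ) : ZMod c) * h = 0)).card : ℝ) ≤ ((2 * γ).natAbs : ℝ) := by
  have hc : 0 < c := Nat.pos_of_ne_zero (NeZero.ne c)
  set M := (2 * γ).natAbs with hM
  have hM0 : 0 < M := Int.natAbs_pos.mpr (by positivity)
  set g := Nat.gcd M c with hg
  have hg0 : 0 < g := Nat.gcd_pos_of_pos_right M hc
  set d := c / g with hd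
  have hdg : d * g = c := Nat.div_mul_cancel (Nat.gcd_dvd_right M c)
  have hd0 : 0 < d := Nat.div_pos (Nat.le_of_dvd hc (Nat.gcd_dvd_right M c)) hg0
  -- every h in the set has d ∣ h.val
  have hmem : ∀ h : ZMod c, ((2 * γ * x : ℤ) : ZMod c) * h = 0 → d ∣ h.val := by
    intro h hh
    have h1 : ((2 * γ * x * h.val : ℤ) : ZMod c) = 0 := by
      push_cast
      push_cast at hh
      rw [← hh]
      congr 1
      simp [ZMod.natCast_val, ZMod.cast_id]
    rw [ZMod.intCast_zmod_eq_zero_iff_dvd] at h1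
    have hcop : IsCoprime (c : ℤ) (x : ℤ) := by
      rw [Int.isCoprime_iff_gcd_eq_one, Int.gcd_natCast_natCast]
      exact hx.symm
    have h2 : (c : ℤ) ∣ (2 * γ * h.val) * x := by
      convert h1 using 1; ring
    have h3 : (c : ℤ) ∣ 2 * γ * h.val := hcop.dvd_of_dvd_mul_right h2
    have h4 : c ∣ M * h.val := by
      have h5 : (c : ℤ).natAbs ∣ ((2 * γ).natAbs * ((h.val : ℤ)).natAbs) := by
        rw [← Int.natAbs_mul]; exact Int.natAbs_dvd_natAbs.mpr h3
      rwa [Int.natAbs_natCast, Int.natAbs_natCast] at h5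
    -- nat arithmetic: c ∣ M * n, g = gcd M c, d = c/g ⇒ d ∣ n
    obtain ⟨k, hk⟩ := h4
    have hMg : g * (M / g) = M := Nat.mul_div_cancel' (Nat.gcd_dvd_left M c)
    have heq : g * ((M / g) * h.val) = g * (d * k) := by
      rw [← mul_assoc, hMg, ← mul_assoc]
      rw [mul_comm g d, hdg]
      exact hk
    have h5 : (M / g) * h.val = d * k := Nat.eq_of_mul_eq_mul_left hg0 heq
    have hcop2 : Nat.Coprime d (M / g) := (Nat.coprime_div_gcd_div_gcd hg0).symm
    -- d ∣ (M/g) * h.val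
    have h6 : d ∣ (M / g) * h.val := ⟨k, h5⟩
    exact (Nat.Coprime.dvd_of_dvd_mul_left hcop2 h6)
  have hcard : (Finset.univ.filter (fun h : ZMod c =>
      ((2 * γ * x : ℤ) : ZMod c) * h = 0)).card ≤ (Finset.range g).card := by
    refine Finset.card_le_card_of_injOn (fun h => h.val / d) ?_ ?_
    · intro h hh
      rw [Finset.coe_filter, Set.mem_setOf_eq] at hh
      have hdvd := hmem h hh.2
      rw [Finset.mem_coe, Finset.mem_range]
      have : h.val < d * g := by rw [hdg]; exact ZMod.val_lt h
      exact Nat.div_lt_of_lt_mul this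
    · intro h1 h1m h2 h2m heq
      rw [Finset.coe_filter, Set.mem_setOf_eq] at h1m h2m
      have e1 := Nat.div_mul_cancel (hmem h1 h1m.2)
      have e2 := Nat.div_mul_cancel (hmem h2 h2m.2)
      have heq' : h1.val / d = h2.val / d := heq
      have : h1.val = h2.val := by
        rw [← e1, ← e2, heq']
      have := congrArg (fun n : ℕ => ((n : ℕ) : ZMod c)) this
      simpa [ZMod.natCast_val, ZMod.cast_id] using this
  rw [Finset.card_range] at hcard
  have : g ≤ M := Nat.le_of_dvd hM0 (Nat.gcd_dvd_left M c)
  exact_mod_cast le_trans hcard this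


lemma gauss_abs (c : ℕ) (hc : 0 < c) (γ : ℤ) (hγ : γ ≠ 0) (x : ℕ) (hx : Nat.Coprime x c)
    (β : ℤ) :
    ‖∑ a ∈ Finset.range c, eC c (γ * (x : ℤ) * (a : ℤ) ^ 2 + β * (a : ℤ))‖ ≤
      Real.sqrt (((2 * γ).natAbs : ℝ) * c) := by
  haveI : NeZero c := ⟨hc.ne'⟩
  set A : ZMod c := ((γ * (x : ℤ) : ℤ) : ZMod c) with hA
  set B₁ : ZMod c := ((β : ℤ) : ZMod c) with hB₁
  have htrans : ∑ a ∈ Finset.range c, eC c (γ * (x : ℤ) * (a : ℤ) ^ 2 + β * (a : ℤ)) =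
      ∑ z : ZMod c, Ech c (A * z ^ 2 + B₁ * z) := by
    rw [← sum_range_eq_sum_zmod c (fun z => Ech c (A * z ^ 2 + B₁ * z))]
    refine Finset.sum_congr rfl fun a _ => ?_
    rw [eC_eq_Ech c hc]
    congr 1
    rw [hA, hB₁]
    push_cast
    ring
  rw [htrans]
  have h1 := gauss_sq c A B₁
  have h2 : ((Finset.univ.filter (fun h : ZMod c => 2 * A * h = 0)).card : ℝ) ≤
      ((2 * γ).natAbs : ℝ) := by
    have e : (2 : ZMod c) * A = ((2 * γ * x : ℤ) : ZMod c) := by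
      rw [hA]; push_cast; ring
    have hsub : Finset.univ.filter (fun h : ZMod c => 2 * A * h = 0) ⊆
        Finset.univ.filter (fun h : ZMod c => ((2 * γ * x : ℤ) : ZMod c) * h = 0) := by
      intro h hh
      rw [Finset.mem_filter] at hh ⊢
      exact ⟨hh.1, by rw [← e, mul_assoc]; rw [← mul_assoc]; exact hh.2⟩
    calc ((Finset.univ.filter (fun h : ZMod c => 2 * A * h = 0)).card : ℝ)
        ≤ ((Finset.univ.filter (fun h : ZMod c =>
            ((2 * γ * x : ℤ) : ZMod c) * h = 0)).card : ℝ) := by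
          exact_mod_cast Finset.card_le_card hsub
      _ ≤ ((2 * γ).natAbs : ℝ) := count_le c γ hγ x hx
  have h3 : (‖∑ z : ZMod c, Ech c (A * z ^ 2 + B₁ * z)‖) ^ 2 ≤
      ((2 * γ).natAbs : ℝ) * c := by
    calc (‖∑ z : ZMod c, Ech c (A * z ^ 2 + B₁ * z)‖) ^ 2
        ≤ (c : ℝ) * (Finset.univ.filter (fun h : ZMod c => 2 * A * h = 0)).card := h1
      _ ≤ (c : ℝ) * ((2 * γ).natAbs : ℝ) := by
          exact mul_le_mul_of_nonneg_left h2 (by positivity)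
      _ = ((2 * γ).natAbs : ℝ) * c := by ring
  have habs : 0 ≤ ‖∑ z : ZMod c, Ech c (A * z ^ 2 + B₁ * z)‖ :=
    norm_nonneg _
  exact (Real.le_sqrt habs (by positivity)).mpr h3


/-- For `γ ≠ 0`, `B² - 4γC ≠ 0`, and every `ε > 0`, there is `C₀ > 0`
depending only on `ε, γ, B, C` such that for every positive integer `c` all
of whose prime factors divide `4γ`, `|S_c^{B,C}(γ; u, v)| ≤ C₀ c^{5/2+ε}`. -/
theorem statement3 (γ B C : ℤ) (hγ : γ ≠ 0) (hD : B ^ 2 - 4 * γ * C ≠ 0)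
    (ε : ℝ) (hε : 0 < ε) :
    ∃ C₀ : ℝ, 0 < C₀ ∧
      ∀ c : ℕ, 0 < c → (∀ p : ℕ, p.Prime → p ∣ c → (p : ℤ) ∣ 4 * γ) →
        ∀ u v : ℤ,
          ‖Sbc γ B C u v c‖ ≤ C₀ * (c : ℝ) ^ ((5 : ℝ) / 2 + ε) := by
  set M : ℕ := (2 * γ).natAbs with hM
  have hM1 : (1 : ℝ) ≤ (M : ℝ) := by
    have : 1 ≤ M := Int.natAbs_pos.mpr (by positivity)
    exact_mod_cast this
  refine ⟨Real.sqrt M, Real.sqrt_pos.mpr (by linarith), ?_⟩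
  intro c hc _hpf u v
  set F := (Finset.range c).filter (fun x => Nat.Coprime x c) with hF
  -- triple sum form
  have h1 : Sbc γ B C u v c =
      ∑ a ∈ Finset.range c, ∑ b ∈ Finset.range c, ∑ x ∈ F,
        eC c ((γ * (a:ℤ)^2 + B*a + C) * x
          + (γ * (b:ℤ)^2 + B*b + C) * (((x : ZMod c)⁻¹).val : ℤ)
          + (2*γ*a*b + a*(B+u) + b*(B+v))) := by
    rw [Sbc]
    refine Finset.sum_congr rfl fun a _ => Finset.sum_congr rfl fun b _ => ?_
    rw [Kl, Finset.sum_mul]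
    exact Finset.sum_congr rfl fun x _ => (eC_add c _ _).symm
  have h2 : Sbc γ B C u v c =
      ∑ x ∈ F, ∑ b ∈ Finset.range c, ∑ a ∈ Finset.range c,
        eC c ((γ * (a:ℤ)^2 + B*a + C) * x
          + (γ * (b:ℤ)^2 + B*b + C) * (((x : ZMod c)⁻¹).val : ℤ)
          + (2*γ*a*b + a*(B+u) + b*(B+v))) := by
    rw [h1, Finset.sum_comm]
    rw [Finset.sum_congr rfl fun b (_ : b ∈ Finset.range c) => Finset.sum_comm]
    exact Finset.sum_comm
  -- bound inner a-sum
  have hinner : ∀ x ∈ F, ∀ b ∈ Finset.range c,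
      ‖∑ a ∈ Finset.range c,
        eC c ((γ * (a:ℤ)^2 + B*a + C) * x
          + (γ * (b:ℤ)^2 + B*b + C) * (((x : ZMod c)⁻¹).val : ℤ)
          + (2*γ*a*b + a*(B+u) + b*(B+v)))‖ ≤ Real.sqrt ((M : ℝ) * c) := by
    intro x hxF b _
    rw [hF, Finset.mem_filter] at hxF
    set X : ℤ := (((x : ZMod c)⁻¹).val : ℤ) with hX
    set β : ℤ := B*(x:ℤ) + 2*γ*(b:ℤ) + (B+u) with hβ
    set D : ℤ := C*(x:ℤ) + (γ*(b:ℤ)^2 + B*b + C) * X + (b:ℤ)*(B+v) with hD2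
    have hsplit : ∑ a ∈ Finset.range c,
        eC c ((γ * (a:ℤ)^2 + B*a + C) * x + (γ * (b:ℤ)^2 + B*b + C) * X
          + (2*γ*a*b + a*(B+u) + b*(B+v)))
        = (∑ a ∈ Finset.range c, eC c (γ * (x:ℤ) * (a:ℤ)^2 + β * a)) * eC c D := by
      rw [Finset.sum_mul]
      refine Finset.sum_congr rfl fun a _ => ?_
      rw [← eC_add]
      congr 1
      rw [hβ, hD2]
      ring
    rw [hsplit, norm_mul, eC_abs, mul_one]
    exact gauss_abs c hc γ hγ x hxF.2 β
  -- assemble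
  calc ‖Sbc γ B C u v c‖
      ≤ ∑ x ∈ F, ∑ b ∈ Finset.range c, ‖∑ a ∈ Finset.range c,
          eC c ((γ * (a:ℤ)^2 + B*a + C) * x
            + (γ * (b:ℤ)^2 + B*b + C) * (((x : ZMod c)⁻¹).val : ℤ)
            + (2*γ*a*b + a*(B+u) + b*(B+v)))‖ := by
        rw [h2]
        refine (norm_sum_le _ _).trans (Finset.sum_le_sum fun x _ => ?_)
        exact norm_sum_le _ _
    _ ≤ ∑ x ∈ F, ∑ b ∈ Finset.range c, Real.sqrt ((M : ℝ) * c) := by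
        refine Finset.sum_le_sum fun x hx => Finset.sum_le_sum fun b hb => ?_
        exact hinner x hx b hb
    _ = (F.card : ℝ) * ((c : ℝ) * Real.sqrt ((M : ℝ) * c)) := by
        rw [Finset.sum_const, Finset.sum_const, Finset.card_range]
        simp [nsmul_eq_mul]
    _ ≤ (c : ℝ) * ((c : ℝ) * Real.sqrt ((M : ℝ) * c)) := by
        have hFc : F.card ≤ c := by
          rw [hF]
          exact (Finset.card_filter_le _ _).trans_eq (Finset.card_range c)
        have : (F.card : ℝ) ≤ (c : ℝ) := by exact_mod_cast hFc
        have hnn : (0:ℝ) ≤ (c : ℝ) * Real.sqrt ((M : ℝ) * c) := by positivity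
        exact mul_le_mul_of_nonneg_right this hnn
    _ = Real.sqrt M * ((c:ℝ)^2 * Real.sqrt c) := by
        rw [Real.sqrt_mul (by positivity)]
        ring
    _ = Real.sqrt M * (c:ℝ) ^ ((5:ℝ)/2) := by
        congr 1
        have hc0 : (0:ℝ) < (c:ℝ) := by exact_mod_cast hc
        rw [show (5:ℝ)/2 = 2 + 1/2 by norm_num, Real.rpow_add hc0,
          ← Real.sqrt_eq_rpow,
          show ((2:ℝ)) = ((2:ℕ):ℝ) by norm_num, Real.rpow_natCast]
    _ ≤ Real.sqrt M * (c:ℝ) ^ ((5:ℝ)/2 + ε) := by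
        have hc1 : (1:ℝ) ≤ (c:ℝ) := by exact_mod_cast hc
        refine mul_le_mul_of_nonneg_left ?_ (Real.sqrt_nonneg _)
        exact Real.rpow_le_rpow_of_exponent_le hc1 (by linarith)
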